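/- Suppose μ : S → ℝ and σ : S → ℝ are continuous, σ is strictly positive, c ∈ ℝ, and the level set {s ∈ S : μ(s) = c} equals ∂A_c. Then for every ε > 0 there exists η > 0 such that the inflated boundary satisfies A_c^η ⊆ {s ∈ S : dist(s, ∂A_c) < ε}. -/

import Mathlib

/-!
Away from the ε-neighbourhood of `∂A_c` lies a compact set on which `μ ≠ c`, because the level
set `{μ = c}` is `∂A_c` itself. The continuous ratio `|μ - c| / σ` is positive there, hence
bounded below by some `η > 0`, and `A_c^η` is exactly the sublevel set `{|μ - c| / σ ≤ η}`.
-/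

open Filter Topology

noncomputable section

/-- The excursion set `A_c = {s : μ s ≥ c}`. -/
def excursionSet {α : Type*} (μ : α → ℝ) (c : ℝ) : Set α := {s | c ≤ μ s}

/-- The inflated boundary `A_c^η = {s : c - η σ(s) ≤ μ(s) ≤ c + η σ(s)}`. -/
def inflatedBoundary {α : Type*} (μ σ : α → ℝ) (c η : ℝ) : Set α :=
  {s | c - η * σ s ≤ μ s ∧ μ s ≤ c + η * σ s}

theorem inflatedBoundary_eq_setOf_abs_sub_div_le {α : Type*} {μ σ : α → ℝ}
    (hσ : ∀ s, 0 < σ s) (c η : ℝ) :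
    inflatedBoundary μ σ c η = {s | |μ s - c| / σ s ≤ η} := by
  ext s
  rw [Set.mem_ofPred_eq, div_le_iff₀ (hσ s), abs_sub_le_iff]
  constructor <;> rintro ⟨h₁, h₂⟩ <;> constructor <;> linarith

theorem exists_pos_setOf_le_subset_infDist_lt {X : Type*} [PseudoMetricSpace X] [CompactSpace X]
    {f : X → ℝ} (hf : Continuous f) {F : Set X} (hpos : ∀ x ∉ F, 0 < f x)
    {ε : ℝ} (hε : 0 < ε) :
    ∃ η, 0 < η ∧ {x | f x ≤ η} ⊆ {x | Metric.infDist x F < ε} := by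
  set K := {x | ε ≤ Metric.infDist x F}
  have hK : IsCompact K :=
    (isClosed_le continuous_const (Metric.continuous_infDist_pt F)).isCompact
  have hpos_K : ∀ x ∈ K, 0 < f x := fun x hx =>
    hpos x fun hxF => (Metric.infDist_zero_of_mem hxF ▸ hx : ε ≤ 0).not_gt hε
  obtain ⟨η, hη, hηf⟩ := hK.exists_forall_le' hf.continuousOn hpos_K
  refine ⟨η / 2, half_pos hη, fun x (hx : f x ≤ η / 2) => ?_⟩
  show Metric.infDist x F < ε
  by_contra! hxK
  linarith [hηf x hxK]

theorem inflatedBoundary_subset_thickening_general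
    {N : ℕ} (S : Set (EuclideanSpace ℝ (Fin N))) (hS : IsCompact S)
    (μ σ : S → ℝ) (hμ : Continuous μ) (hσc : Continuous σ) (hσ : ∀ s, 0 < σ s) (c : ℝ)
    (hlevel : {s : S | μ s = c} = frontier (excursionSet μ c)) :
    ∀ ε : ℝ, 0 < ε → ∃ η : ℝ, 0 < η ∧
      inflatedBoundary μ σ c η ⊆
        {s : S | Metric.infDist s (frontier (excursionSet μ c)) < ε} := by
  intro ε hε
  have : CompactSpace S := isCompact_iff_compactSpace.mp hS
  have hratio : Continuous fun s => |μ s - c| / σ s :=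
    ((hμ.sub continuous_const).abs).div hσc fun s => (hσ s).ne'
  have hpos : ∀ s ∉ frontier (excursionSet μ c), 0 < |μ s - c| / σ s := by
    intro s hs
    have hne : μ s ≠ c := fun h => hs (hlevel ▸ h)
    exact div_pos (abs_pos.mpr (sub_ne_zero.mpr hne)) (hσ s)
  simpa only [inflatedBoundary_eq_setOf_abs_sub_div_le hσ] using
    exists_pos_setOf_le_subset_infDist_lt hratio hpos hε

/-- For every `ε > 0` there is `η > 0` such that the inflated boundary `A_c^η` is contained in
the `ε`-neighborhood of the boundary `∂A_c`. -/
theorem inflatedBoundary_subset_thickening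
    {N : ℕ} (hN : 1 ≤ N) (S : Set (EuclideanSpace ℝ (Fin N))) (hS : IsCompact S)
    (μ σ : S → ℝ) (hμ : Continuous μ) (hσc : Continuous σ) (hσ : ∀ s, 0 < σ s) (c : ℝ)
    (hlevel : {s : S | μ s = c} = frontier (excursionSet μ c)) :
    ∀ ε : ℝ, 0 < ε → ∃ η : ℝ, 0 < η ∧
      inflatedBoundary μ σ c η ⊆
        {s : S | Metric.infDist s (frontier (excursionSet μ c)) < ε} :=
  inflatedBoundary_subset_thickening_general S hS μ σ hμ hσc hσ c hlevel

end
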